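/- Let A be a commutative ring with an ℕ-indexed internal grading, and let Γ be a connective graded A-module. Suppose that for every index set I the canonical comparison map Γ ⊗_A ∏_{i∈I} A → ∏_{i∈I} Γ, sending x ⊗ (aᵢ)ᵢ to (aᵢ • x)ᵢ, is surjective. Then Γ has finite-type generators: there exists a set S of homogeneous elements of Γ generating Γ as an A-module with only finitely many elements of S in each degree. -/

import Mathlib

open scoped TensorProduct

noncomputable section

universe u v w

/-- The canonical comparison map `Γ ⊗[A] (∏ i, M i) → ∏ i, (Γ ⊗[A] M i)`,
sending `x ⊗ (mᵢ)ᵢ` to `(x ⊗ mᵢ)ᵢ`. -/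
def comparisonMap (A : Type u) [CommRing A] (Γ : Type v) [AddCommGroup Γ] [Module A Γ]
    {I : Type w} (M : I → Type*) [∀ i, AddCommGroup (M i)] [∀ i, Module A (M i)] :
    (Γ ⊗[A] (∀ i, M i)) →ₗ[A] ∀ i, Γ ⊗[A] M i :=
  LinearMap.pi fun i => LinearMap.lTensor Γ (LinearMap.proj i)

/-- The canonical comparison map `Γ ⊗[A] (∏ i ∈ I, A) → ∏ i ∈ I, Γ`,
sending `x ⊗ (aᵢ)ᵢ` to `(aᵢ • x)ᵢ`. -/
def comparisonMapPow (A : Type u) [CommRing A] (Γ : Type v) [AddCommGroup Γ] [Module A Γ]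
    (I : Type w) :
    (Γ ⊗[A] (I → A)) →ₗ[A] (I → Γ) :=
  LinearMap.pi fun i =>
    (TensorProduct.rid A Γ).toLinearMap ∘ₗ LinearMap.lTensor Γ (LinearMap.proj i)

/-- `x` is a homogeneous element for the grading `ℳ`. -/
def IsHomogeneous {M : Type v} [AddCommGroup M] (ℳ : ℕ → AddSubgroup M) (x : M) : Prop :=
  ∃ n, x ∈ ℳ n

/-- A graded module has *finite-type generators* if it is generated, as an `A`-module, by a set
of homogeneous elements having only finitely many elements in each degree. -/
def HasFiniteTypeGenerators (A : Type u) [CommRing A] {M : Type v} [AddCommGroup M] [Module A M]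
    (ℳ : ℕ → AddSubgroup M) : Prop :=
  ∃ S : Set M, (∀ s ∈ S, IsHomogeneous ℳ s) ∧ Submodule.span A S = ⊤ ∧
    ∀ n, (S ∩ (ℳ n : Set M)).Finite

/-- A submodule `K` of a graded module has *finite-type generators* (for the grading inherited
from the ambient module) if it is generated, as an `A`-module, by a set of homogeneous elements
of the ambient module, lying in `K`, with only finitely many elements in each degree. -/
def SubmoduleHasFiniteTypeGenerators (A : Type u) [CommRing A] {M : Type v} [AddCommGroup M]
    [Module A M] (ℳ : ℕ → AddSubgroup M) (K : Submodule A M) : Prop :=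
  ∃ S : Set M, S ⊆ (K : Set M) ∧ (∀ s ∈ S, IsHomogeneous ℳ s) ∧ Submodule.span A S = K ∧
    ∀ n, (S ∩ (ℳ n : Set M)).Finite

/-- A graded module is *finite-type free* if it admits a basis of homogeneous elements with
only finitely many basis elements in each degree. -/
def IsFiniteTypeFree (A : Type u) [CommRing A] {F : Type v} [AddCommGroup F] [Module A F]
    (ℱ : ℕ → AddSubgroup F) : Prop :=
  ∃ (J : Type v) (b : Module.Basis J A F) (d : J → ℕ),
    (∀ j, b j ∈ ℱ (d j)) ∧ ∀ n, {j | d j = n}.Finite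

/-- The degree-`n` component of the connective graded free `A`-module `⨁ j, Σ^{d j} A`,
realized concretely on `J →₀ A`: the `j`-th coordinate of a degree-`n` element is a
homogeneous element of `A` of degree `n - d j` (and vanishes if `d j > n`). -/
def gradedFreeSubgroup {A : Type u} [CommRing A] (𝒜 : ℕ → AddSubgroup A) {J : Type w}
    (d : J → ℕ) (n : ℕ) : AddSubgroup (J →₀ A) where
  carrier := {f | ∀ j, f j ∈ 𝒜 (n - d j) ∧ (d j ≤ n ∨ f j = 0)}
  zero_mem' := by
    intro j
    refine ⟨by simpa using zero_mem (𝒜 (n - d j)), Or.inr (by simp)⟩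
  add_mem' := by
    intro a b ha hb j
    refine ⟨by simpa using add_mem (ha j).1 (hb j).1, ?_⟩
    rcases (ha j).2 with h | h
    · exact Or.inl h
    · rcases (hb j).2 with h' | h'
      · exact Or.inl h'
      · exact Or.inr (by simp [h, h'])
  neg_mem' := by
    intro a ha j
    refine ⟨by simpa using neg_mem (ha j).1, ?_⟩
    rcases (ha j).2 with h | h
    · exact Or.inl h
    · exact Or.inr (by simp [h])

/-- A connective graded `A`-module `Γ` is *finite-type* if there is a finite-type free
connective graded `A`-module `F₀` (concretely realized as `J →₀ A`, with `J` having finitely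
many elements in each degree) together with a surjective degree-preserving `A`-linear map
`p : F₀ → Γ` whose kernel has finite-type generators (for the inherited grading). -/
def IsFiniteType (A : Type u) [CommRing A] (𝒜 : ℕ → AddSubgroup A) {Γ : Type v}
    [AddCommGroup Γ] [Module A Γ] (ℳ : ℕ → AddSubgroup Γ) : Prop :=
  ∃ (J : Type) (d : J → ℕ) (p : (J →₀ A) →ₗ[A] Γ),
    (∀ n, {j | d j = n}.Finite) ∧ Function.Surjective p ∧
    (∀ n, ∀ f ∈ gradedFreeSubgroup 𝒜 d n, p f ∈ ℳ n) ∧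
    SubmoduleHasFiniteTypeGenerators A (gradedFreeSubgroup 𝒜 d) (LinearMap.ker p)
/-!
Taking `I = Γ`, surjectivity puts the identity family `(γ)_γ` in the image of some
`∑ₖ gₖ ⊗ fₖ`, so every `γ = ∑ₖ fₖ(γ) • gₖ` and `Γ` is finitely generated. The homogeneous
components of finitely many generators then form a finite homogeneous generating set.
-/

open Submodule

section Comparison

variable {A : Type u} [CommRing A] {Γ : Type v} [AddCommGroup Γ] [Module A Γ] {I : Type w}

theorem comparisonMapPow_tmul (x : Γ) (f : I → A) :
    comparisonMapPow A Γ I (x ⊗ₜ f) = fun i => f i • x := by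
  ext i
  simp [comparisonMapPow]

theorem exists_fg_forall_comparisonMapPow_mem (x : Γ ⊗[A] (I → A)) :
    ∃ P : Submodule A Γ, P.FG ∧ ∀ i, comparisonMapPow A Γ I x i ∈ P := by
  induction x using TensorProduct.induction_on with
  | zero => exact ⟨⊥, fg_bot, by simp⟩
  | tmul g f =>
    refine ⟨span A {g}, fg_span_singleton g, fun i => ?_⟩
    rw [comparisonMapPow_tmul]
    exact smul_mem _ (f i) (mem_span_singleton_self g)
  | add x y hx hy =>
    obtain ⟨P, hP, hxP⟩ := hx
    obtain ⟨Q, hQ, hyQ⟩ := hy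
    refine ⟨P ⊔ Q, hP.sup hQ, fun i => ?_⟩
    rw [map_add, Pi.add_apply]
    exact add_mem (mem_sup_left (hxP i)) (mem_sup_right (hyQ i))

theorem Module.Finite.of_comparisonMapPow_surjective
    (h : Function.Surjective (comparisonMapPow A Γ Γ)) : Module.Finite A Γ := by
  obtain ⟨x, hx⟩ := h id
  obtain ⟨P, hP, hxP⟩ := exists_fg_forall_comparisonMapPow_mem x
  have hP_top : P = ⊤ := eq_top_iff.2 fun γ _ => by simpa [hx] using hxP γ
  exact ⟨hP_top ▸ hP⟩

end Comparison

section Graded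

variable {A : Type u} [CommRing A] {M : Type v} [AddCommGroup M] [Module A M]
  (ℳ : ℕ → AddSubgroup M) [DirectSum.Decomposition ℳ]

theorem hasFiniteTypeGenerators_of_finite [Module.Finite A M] : HasFiniteTypeGenerators A ℳ := by
  classical
  obtain ⟨T, hT⟩ := Module.Finite.fg_top (R := A) (M := M)
  let S : Finset M := T.biUnion fun x =>
    (DirectSum.decompose ℳ x).support.image fun n => (DirectSum.decompose ℳ x n : M)
  refine ⟨S, fun s hs => ?_, eq_top_iff.2 ?_, fun n => S.finite_toSet.subset Set.inter_subset_left⟩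
  · obtain ⟨x, -, hs⟩ := Finset.mem_biUnion.1 hs
    obtain ⟨n, -, rfl⟩ := Finset.mem_image.1 hs
    exact ⟨n, SetLike.coe_mem _⟩
  · rw [← hT, span_le]
    intro x hx
    rw [← DirectSum.sum_support_decompose ℳ x]
    exact sum_mem fun n hn =>
      subset_span (Finset.mem_biUnion.2 ⟨x, hx, Finset.mem_image_of_mem _ hn⟩)

end Graded

theorem hasFiniteTypeGenerators_of_comparisonMapPow_surjective_general
    {A : Type u} [CommRing A]
    {Γ : Type u} [AddCommGroup Γ] [Module A Γ] (ℳ : ℕ → AddSubgroup Γ)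
    [DirectSum.Decomposition ℳ]
    (h : ∀ (I : Type u), Function.Surjective (comparisonMapPow A Γ I)) :
    HasFiniteTypeGenerators A ℳ := by
  have := Module.Finite.of_comparisonMapPow_surjective (h Γ)
  exact hasFiniteTypeGenerators_of_finite ℳ

/-- If `Γ` is a connective graded module over the connective graded commutative
ring `A` such that for every index set `I` the canonical comparison map
`Γ ⊗[A] ∏ᵢ A → ∏ᵢ Γ`, `x ⊗ (aᵢ)ᵢ ↦ (aᵢ • x)ᵢ`, is surjective, then `Γ` has finite-type
generators: a generating set of homogeneous elements with only finitely many in each degree. -/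
theorem hasFiniteTypeGenerators_of_comparisonMapPow_surjective
    {A : Type u} [CommRing A] (𝒜 : ℕ → AddSubgroup A) [GradedRing 𝒜]
    {Γ : Type u} [AddCommGroup Γ] [Module A Γ] (ℳ : ℕ → AddSubgroup Γ)
    [DirectSum.Decomposition ℳ] [SetLike.GradedSMul 𝒜 ℳ]
    (h : ∀ (I : Type u), Function.Surjective (comparisonMapPow A Γ I)) :
    HasFiniteTypeGenerators A ℳ :=
  hasFiniteTypeGenerators_of_comparisonMapPow_surjective_general ℳ h
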